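/- arXiv:1806.01641 — 2 statements merged into one kernel-verified Lean document; each statement's English description precedes it below -/
import Mathlib

section
/- For every u in the open interval (1/√3, √3), one has φ₁(u) = φ₂(1/u) (note that 1/u also lies in (1/√3, √3)). -/
noncomputable def mParam (u : ℝ) : ℝ :=
  (8 * u ^ 3 - u ^ 3 * (1 + u ^ 2) ^ ((3 : ℝ) / 2)) /
    (8 * u ^ 3 - (1 + u ^ 2) ^ ((3 : ℝ) / 2))

noncomputable def alphaParam (u : ℝ) : ℝ :=
  Real.sqrt (2 * mParam u * u ^ 2 + 2)

noncomputable def muParam (u : ℝ) : ℝ :=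
  4 * mParam u * alphaParam u / Real.sqrt (1 + u ^ 2) +
    alphaParam u * (mParam u) ^ 2 / (2 * u) + alphaParam u / 2

noncomputable def phi1 (u : ℝ) : ℝ :=
  1 + 2 * (mParam u + 1) * (alphaParam u) ^ 3 * (2 - u ^ 2) /
    (muParam u * (1 + u ^ 2) ^ ((5 : ℝ) / 2))

noncomputable def phi2 (u : ℝ) : ℝ :=
  1 + 2 * (mParam u + 1) * (alphaParam u) ^ 3 * (2 * u ^ 2 - 1) /
    (muParam u * (1 + u ^ 2) ^ ((5 : ℝ) / 2))

noncomputable def psi1 (u : ℝ) : ℝ :=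
  1 + (4 * alphaParam u / muParam u) *
    ((2 * (mParam u) ^ 2 * u ^ 4 + (6 * mParam u - (mParam u) ^ 2 - 1) * u ^ 2 + 2) /
        (1 + u ^ 2) ^ ((5 : ℝ) / 2) -
      mParam u * u ^ 2 / 8 - mParam u / (8 * u ^ 3))

noncomputable def psi2 (u : ℝ) : ℝ :=
  1 + (4 * alphaParam u / muParam u) *
    ((-(mParam u) ^ 2 * u ^ 4 + (2 * (mParam u) ^ 2 - 6 * mParam u + 2) * u ^ 2 - 1) /
        (1 + u ^ 2) ^ ((5 : ℝ) / 2) +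
      mParam u * u ^ 2 / 4 + mParam u / (4 * u ^ 3))

/-!
Under `u ↦ 1/u` one has `m(1/u) = 1/m(u)`, `α(1/u) = α(u)/(u√m)` and `μ(1/u) = μ(u)/(m²√m)`
with `m = m(u)`. Substituting these and `(1 + u⁻²)^{5/2} = (1 + u²)^{5/2}/u⁵` into `φ₂(1/u)`
leaves a rational identity in `u`, `√m`, `α(u)` and `μ(u)`. The square roots involved are
genuine only for `m(u) > 0`, which holds on the interval `1/3 < u² < 3`.
-/

open Real

lemma sq_rpow_half {u : ℝ} (hu : 0 ≤ u) (x : ℝ) : (u ^ 2) ^ (x / 2) = u ^ x := by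
  rw [← rpow_natCast u 2, ← rpow_mul hu]
  ring_nf

lemma one_add_one_div_sq {u : ℝ} (hu : u ≠ 0) : 1 + (1 / u) ^ 2 = (1 + u ^ 2) / u ^ 2 := by
  field_simp
  ring

lemma one_add_one_div_sq_rpow_half {u : ℝ} (hu : 0 < u) (x : ℝ) :
    (1 + (1 / u) ^ 2) ^ (x / 2) = (1 + u ^ 2) ^ (x / 2) / u ^ x := by
  rw [one_add_one_div_sq hu.ne', div_rpow (by positivity) (by positivity), sq_rpow_half hu.le]

lemma sqrt_one_add_one_div_sq {u : ℝ} (hu : 0 < u) :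
    √(1 + (1 / u) ^ 2) = √(1 + u ^ 2) / u := by
  rw [one_add_one_div_sq hu.ne', sqrt_div' _ (by positivity), sqrt_sq hu.le]

lemma mParam_eq (u : ℝ) :
    mParam u = u ^ 3 * (8 - (1 + u ^ 2) ^ ((3 : ℝ) / 2)) /
      (8 * u ^ 3 - (1 + u ^ 2) ^ ((3 : ℝ) / 2)) := by
  rw [mParam, mul_sub, mul_comm (u ^ 3) 8]

-- When a denominator vanishes, both sides are the junk value `0`.
lemma mParam_one_div {u : ℝ} (hu : 0 < u) : mParam (1 / u) = (mParam u)⁻¹ := by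
  have hs : (1 + (1 / u) ^ 2) ^ ((3 : ℝ) / 2) = (1 + u ^ 2) ^ ((3 : ℝ) / 2) / u ^ 3 := by
    rw [one_add_one_div_sq_rpow_half hu, rpow_ofNat]
  have hu3 : u ^ 3 ≠ 0 := by positivity
  rw [mParam_eq, mParam_eq, hs, inv_div]
  field_simp

lemma mParam_pos {u : ℝ} (hu : 0 < u) (hu₁ : 1 / 3 < u ^ 2) (hu₃ : u ^ 2 < 3) :
    0 < mParam u := by
  have h₁ : 0 ≤ 1 + u ^ 2 := by positivity
  have hs₈ : (1 + u ^ 2) ^ ((3 : ℝ) / 2) < 8 :=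
    calc (1 + u ^ 2) ^ ((3 : ℝ) / 2) < ((2 : ℝ) ^ 2) ^ ((3 : ℝ) / 2) :=
          rpow_lt_rpow h₁ (by linarith) (by norm_num)
      _ = 8 := by rw [sq_rpow_half zero_le_two, rpow_ofNat]; norm_num
  have hs₈u : (1 + u ^ 2) ^ ((3 : ℝ) / 2) < 8 * u ^ 3 :=
    calc (1 + u ^ 2) ^ ((3 : ℝ) / 2) < ((2 * u) ^ 2) ^ ((3 : ℝ) / 2) :=
          rpow_lt_rpow h₁ (by linarith) (by norm_num)
      _ = 8 * u ^ 3 := by rw [sq_rpow_half (by positivity), rpow_ofNat]; ring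
  rw [mParam_eq]
  exact div_pos (mul_pos (by positivity) (by linarith)) (by linarith)

lemma alphaParam_one_div {u : ℝ} (hu : 0 < u) (hm : 0 < mParam u) :
    alphaParam (1 / u) = alphaParam u / (u * √(mParam u)) := by
  have hsplit : 2 * (mParam u)⁻¹ * (1 / u) ^ 2 + 2 =
      (2 * mParam u * u ^ 2 + 2) / (u ^ 2 * mParam u) := by
    field_simp
    ring
  rw [alphaParam, alphaParam, mParam_one_div hu, hsplit, sqrt_div' _ (by positivity),
    sqrt_mul (sq_nonneg u), sqrt_sq hu.le]

lemma muParam_one_div {u : ℝ} (hu : 0 < u) (hm : 0 < mParam u) :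
    muParam (1 / u) = muParam u / (mParam u ^ 2 * √(mParam u)) := by
  -- Writing `m = t²` turns the identity into a rational one.
  obtain ⟨t, ht, hmt⟩ : ∃ t, 0 < t ∧ mParam u = t ^ 2 :=
    ⟨√(mParam u), sqrt_pos.2 hm, (sq_sqrt hm.le).symm⟩
  have : √(1 + u ^ 2) ≠ 0 := by positivity
  rw [muParam, muParam, mParam_one_div hu, alphaParam_one_div hu hm,
    sqrt_one_add_one_div_sq hu, hmt, sqrt_sq ht.le]
  field_simp
  ring

lemma phi2_one_div {u : ℝ} (hu : 0 < u) (hm : 0 < mParam u) : phi2 (1 / u) = phi1 u := by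
  obtain ⟨t, ht, hmt⟩ : ∃ t, 0 < t ∧ mParam u = t ^ 2 :=
    ⟨√(mParam u), sqrt_pos.2 hm, (sq_sqrt hm.le).symm⟩
  have hα : 0 < alphaParam u := sqrt_pos.2 (by positivity)
  have hμ : muParam u ≠ 0 := by rw [muParam]; positivity
  have hP : (1 + u ^ 2) ^ ((5 : ℝ) / 2) ≠ 0 := by positivity
  rw [phi1, phi2, mParam_one_div hu, alphaParam_one_div hu hm, muParam_one_div hu hm,
    one_add_one_div_sq_rpow_half hu, rpow_ofNat, hmt, sqrt_sq ht.le]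
  field_simp
  ring

/-- For every `u ∈ (1/√3, √3)`, `φ₁(u) = φ₂(1/u)`. -/
theorem phi1_eq_phi2_inv (u : ℝ) (hu1 : 1 / Real.sqrt 3 < u) (hu2 : u < Real.sqrt 3) :
    phi1 u = phi2 (1 / u) := by
  have hu : 0 < u := lt_trans (by positivity) hu1
  have hu₁ : 1 / 3 < u ^ 2 := by
    rwa [one_div, ← sqrt_inv, sqrt_lt' hu, ← one_div] at hu1
  have hu₃ : u ^ 2 < 3 := (lt_sqrt hu.le).1 hu2
  exact (phi2_one_div hu (mParam_pos hu hu₁ hu₃)).symm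
end

section
/- For every u in the open interval (1/√3, √3), one has ψ₁(u) = ψ₁(1/u) and ψ₂(u) = ψ₂(1/u) (note that 1/u also lies in (1/√3, √3)). -/
/-!
Inversion `u ↦ 1/u` maps `1 + u²` to `(1 + u²)/u²` and thereby exchanges, up to the common
factor `u⁻⁶`, the numerator and denominator of `m`; hence `m(1/u) = 1/m(u)`. On the interval
`m > 0`, and then `α(1/u) = α(u)/(u √m)` and `μ(1/u) = μ(u)/m^{5/2}`, so the prefactor `4α/μ`
of `ψᵢ` picks up the factor `m²/u`, while the bracket it multiplies picks up exactly `u/m²`.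
-/

open Real

lemma one_add_sq_rpow_div_two (u : ℝ) (n : ℕ) [n.AtLeastTwo] :
    (1 + u ^ 2) ^ ((OfNat.ofNat n : ℝ) / 2) = √(1 + u ^ 2) ^ (OfNat.ofNat n : ℕ) := by
  rw [rpow_div_two_eq_sqrt _ (by positivity), rpow_ofNat]

lemma sqrt_one_add_inv_sq {u : ℝ} (hu : 0 < u) : √(1 + u⁻¹ ^ 2) = √(1 + u ^ 2) / u := by
  rw [eq_div_iff hu.ne', ← sqrt_sq hu.le, ← sqrt_mul (by positivity), sqrt_sq hu.le]
  congr 1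
  field_simp
  ring

lemma mParam_inv {u : ℝ} (hu : 0 < u) : mParam u⁻¹ = (mParam u)⁻¹ := by
  unfold mParam
  rw [one_add_sq_rpow_div_two, one_add_sq_rpow_div_two, sqrt_one_add_inv_sq hu, inv_div]
  have hu6 : u ^ 6 ≠ 0 := by positivity
  set s := √(1 + u ^ 2)
  rw [← div_div_div_cancel_right₀ hu6 (8 * u ^ 3 - s ^ 3)]
  congr 1 <;> field_simp

lemma mParam_pos_s2 {u : ℝ} (hu1 : 1 / √3 < u) (hu2 : u < √3) : 0 < mParam u := by
  have hu : 0 < u := (by positivity : (0 : ℝ) < 1 / √3).trans hu1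
  have h3u : 1 < √3 * u := by rwa [div_lt_iff₀' (by positivity)] at hu1
  have hs2 : √(1 + u ^ 2) < 2 := by
    rw [sqrt_lt' two_pos]
    nlinarith [sq_sqrt (show (0 : ℝ) ≤ 3 by norm_num)]
  have hs2u : √(1 + u ^ 2) < 2 * u := by
    rw [sqrt_lt' (by positivity)]
    nlinarith [sq_sqrt (show (0 : ℝ) ≤ 3 by norm_num)]
  have hs0 : 0 ≤ √(1 + u ^ 2) := sqrt_nonneg _
  unfold mParam
  rw [one_add_sq_rpow_div_two]
  apply div_pos
  · have : √(1 + u ^ 2) ^ 3 < 2 ^ 3 := pow_lt_pow_left₀ hs2 hs0 (by norm_num)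
    nlinarith [pow_pos hu 3]
  · have : √(1 + u ^ 2) ^ 3 < (2 * u) ^ 3 := pow_lt_pow_left₀ hs2u hs0 (by norm_num)
    nlinarith

lemma alphaParam_inv {u : ℝ} (hu : 0 < u) (hm : 0 < mParam u) :
    alphaParam u⁻¹ = alphaParam u / (u * √(mParam u)) := by
  have hut : u * √(mParam u) = √(u ^ 2 * mParam u) := by
    rw [sqrt_mul (sq_nonneg u), sqrt_sq hu.le]
  unfold alphaParam
  rw [hut, ← sqrt_div' _ (by positivity), mParam_inv hu]
  congr 1
  field_simp
  ring

lemma muParam_inv {u : ℝ} (hu : 0 < u) (hm : 0 < mParam u) :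
    muParam u⁻¹ = muParam u / (mParam u ^ 2 * √(mParam u)) := by
  have ht : 0 < √(mParam u) := sqrt_pos.mpr hm
  unfold muParam
  rw [mParam_inv hu, alphaParam_inv hu hm, sqrt_one_add_inv_sq hu]
  field_simp
  ring

lemma muParam_pos {u : ℝ} (hu : 0 < u) (hm : 0 < mParam u) : 0 < muParam u := by
  have hα : 0 < alphaParam u := sqrt_pos.mpr (by positivity)
  unfold muParam
  positivity

lemma alphaParam_div_muParam_inv {u : ℝ} (hu : 0 < u) (hm : 0 < mParam u) :
    alphaParam u⁻¹ / muParam u⁻¹ = mParam u ^ 2 / u * (alphaParam u / muParam u) := by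
  have hμ := muParam_pos hu hm
  rw [alphaParam_inv hu hm, muParam_inv hu hm]
  field_simp

lemma psi1_inv {u : ℝ} (hu : 0 < u) (hm : 0 < mParam u) : psi1 u⁻¹ = psi1 u := by
  unfold psi1
  rw [mul_div_assoc 4 (alphaParam u⁻¹), mul_div_assoc 4 (alphaParam u),
    alphaParam_div_muParam_inv hu hm, one_add_sq_rpow_div_two, one_add_sq_rpow_div_two,
    sqrt_one_add_inv_sq hu, mParam_inv hu]
  field_simp
  ring

lemma psi2_inv {u : ℝ} (hu : 0 < u) (hm : 0 < mParam u) : psi2 u⁻¹ = psi2 u := by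
  unfold psi2
  rw [mul_div_assoc 4 (alphaParam u⁻¹), mul_div_assoc 4 (alphaParam u),
    alphaParam_div_muParam_inv hu hm, one_add_sq_rpow_div_two, one_add_sq_rpow_div_two,
    sqrt_one_add_inv_sq hu, mParam_inv hu]
  field_simp
  ring

/-- For every `u ∈ (1/√3, √3)`, `ψ₁(u) = ψ₁(1/u)` and `ψ₂(u) = ψ₂(1/u)`. -/
theorem psi_inv_symm (u : ℝ) (hu1 : 1 / Real.sqrt 3 < u) (hu2 : u < Real.sqrt 3) :
    psi1 u = psi1 (1 / u) ∧ psi2 u = psi2 (1 / u) := by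
  have hu : 0 < u := (by positivity : (0 : ℝ) < 1 / √3).trans hu1
  have hm := mParam_pos_s2 hu1 hu2
  rw [one_div]
  exact ⟨(psi1_inv hu hm).symm, (psi2_inv hu hm).symm⟩
end
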